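/- Let ω : ℝ → ℝ be odd, non-negative on ℝ⁺, with ω(x)/x non-decreasing on (0,∞), and let α(u)=min(|u|,u²). For all x, y ∈ ℝ^d and a > 0: α(a·d_ω(x,y)) ≥ α(a/√d) · ∑_{j=1}^d α(ω(|x_j − y_j|/2)), where d_ω(x,y) = (∑_j |ω(x_j)−ω(y_j)|²)^{1/2}. -/
import Mathlib

noncomputable def alpha (u : ℝ) : ℝ := min |u| (u ^ 2)

noncomputable def dOmega {d : ℕ} (ω : ℝ → ℝ) (x y : Fin d → ℝ) : ℝ :=
  Real.sqrt (∑ i, (ω (x i) - ω (y i)) ^ 2)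

lemma alpha_nonneg (u : ℝ) : 0 ≤ alpha u :=
  le_min (abs_nonneg u) (sq_nonneg u)

lemma alpha_mono {u v : ℝ} (hu : 0 ≤ u) (huv : u ≤ v) : alpha u ≤ alpha v := by
  have hv : 0 ≤ v := hu.trans huv
  unfold alpha
  rw [abs_of_nonneg hu, abs_of_nonneg hv]
  exact min_le_min huv (by nlinarith)

lemma alpha_mul_le {u v : ℝ} (hu : 0 ≤ u) (hv : 0 ≤ v) :
    alpha u * alpha v ≤ alpha (u * v) := by
  unfold alpha
  rw [abs_of_nonneg hu, abs_of_nonneg hv, abs_of_nonneg (mul_nonneg hu hv)]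
  have h1 : min u (u ^ 2) * min v (v ^ 2) ≤ u * v :=
    mul_le_mul (min_le_left _ _) (min_le_left _ _) (le_min hv (sq_nonneg v)) hu
  have h2 : min u (u ^ 2) * min v (v ^ 2) ≤ (u * v) ^ 2 := by
    have := mul_le_mul (min_le_right u (u ^ 2)) (min_le_right v (v ^ 2))
      (le_min hv (sq_nonneg v)) (sq_nonneg u)
    nlinarith
  exact le_min h1 h2

lemma alpha_superadd {u v : ℝ} (hu : 0 ≤ u) (hv : 0 ≤ v) :
    alpha u + alpha v ≤ alpha (u + v) := by
  unfold alpha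
  rw [abs_of_nonneg hu, abs_of_nonneg hv, abs_of_nonneg (add_nonneg hu hv)]
  refine le_min ?_ ?_
  · exact add_le_add (min_le_left _ _) (min_le_left _ _)
  · have := add_le_add (min_le_right u (u ^ 2)) (min_le_right v (v ^ 2))
    nlinarith

lemma alpha_sum_le {ι : Type*} (s : Finset ι) (f : ι → ℝ) (hf : ∀ i ∈ s, 0 ≤ f i) :
    ∑ i ∈ s, alpha (f i) ≤ alpha (∑ i ∈ s, f i) := by
  induction s using Finset.cons_induction with
  | empty => simp [alpha]
  | cons i s his ih =>
    rw [Finset.sum_cons, Finset.sum_cons]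
    have h1 : ∀ j ∈ s, 0 ≤ f j := fun j hj => hf j (Finset.mem_cons_of_mem hj)
    calc alpha (f i) + ∑ j ∈ s, alpha (f j)
        ≤ alpha (f i) + alpha (∑ j ∈ s, f j) := by linarith [ih h1]
      _ ≤ alpha (f i + ∑ j ∈ s, f j) :=
          alpha_superadd (hf i (Finset.mem_cons_self i s)) (Finset.sum_nonneg h1)

section omega_lemma
variable (ω : ℝ → ℝ)
  (hodd : ∀ x : ℝ, ω (-x) = -ω x)
  (hnonneg : ∀ x : ℝ, 0 ≤ x → 0 ≤ ω x)
  (hmono : ∀ x y : ℝ, 0 < x → x ≤ y → ω x / x ≤ ω y / y)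

include hodd hnonneg hmono

lemma omega_zero : ω 0 = 0 := by have := hodd 0; simp at this; linarith

lemma omega_mono {m s : ℝ} (hm : 0 < m) (hms : m ≤ s) : ω m ≤ ω s := by
  have hs : 0 < s := hm.trans_le hms
  have h := hmono m s hm hms
  have hωm : 0 ≤ ω m := hnonneg m hm.le
  have : ω m / m ≤ ω s / s := h
  rw [div_le_div_iff₀ hm hs] at this
  nlinarith

lemma omega_key {t s : ℝ} (ht : 0 ≤ t) (hts : t < s) :
    ω ((s - t) / 2) ≤ ω s - ω t := by
  set m := (s - t) / 2 with hm
  have hm0 : 0 < m := by rw [hm]; linarith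
  have hs : 0 < s := lt_of_le_of_lt ht hts
  have hωm : 0 ≤ ω m := hnonneg m hm0.le
  have hms : m ≤ s := by simp only [hm]; linarith
  have h2 : ω m / m ≤ ω s / s := hmono m s hm0 hms
  rw [div_le_div_iff₀ hm0 hs] at h2
  have h3 : ω t * s ≤ ω s * t := by
    rcases eq_or_lt_of_le ht with h | h
    · have := omega_zero ω hodd hnonneg hmono
      rw [← h, this]; simp
    · have := hmono t s h hts.le
      rw [div_le_div_iff₀ h hs] at this; exact this
  -- ω s - ω t ≥ ω s * (s - t) / s = 2 m ω s / s ≥ 2 ω m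
  have h4 : ω s * (s - t) ≥ ω s * s - ω s * t := by ring_nf; linarith
  -- (ω s - ω t) * s ≥ ω s * (s - t) = 2 m * ω s ≥ 2 m * (ω m * s / m)... 
  have key : (ω s - ω t) * s ≥ 2 * m * ω s := by
    have hst : s - t = 2 * m := by rw [hm]; ring
    have h5 : ω s * (s - t) = 2 * m * ω s := by rw [hst]; ring
    nlinarith [h3, h5]
  nlinarith

lemma omega_key' {t s : ℝ} (hts : t < s) :
    ω ((s - t) / 2) ≤ ω s - ω t := by
  set m := (s - t) / 2 with hm
  have hm0 : 0 < m := by rw [hm]; linarith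
  have hωm : 0 ≤ ω m := hnonneg m hm0.le
  rcases le_or_gt 0 t with ht | ht
  · exact omega_key ω hodd hnonneg hmono ht hts
  · rcases le_or_gt s 0 with hs | hs
    · have h : (0:ℝ) ≤ -s := by linarith
      have h2 : -s < -t := by linarith
      have := omega_key ω hodd hnonneg hmono h h2
      have hmeq : (-t - -s) / 2 = m := by simp [hm]; ring
      rw [hmeq, hodd, hodd] at this
      linarith
    · -- t < 0 < s
      rcases le_or_gt m s with hms | hms
      · have h1 : ω m ≤ ω s := omega_mono ω hodd hnonneg hmono hm0 hms
        have h2 : 0 ≤ ω (-t) := hnonneg _ (by linarith)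
        rw [hodd] at h2
        linarith
      · have hmt : m ≤ -t := by simp [hm] at *; linarith
        have h1 : ω m ≤ ω (-t) := omega_mono ω hodd hnonneg hmono hm0 hmt
        rw [hodd] at h1
        have h2 : 0 ≤ ω s := hnonneg _ hs.le
        linarith

lemma omega_abs_sub (s t : ℝ) : ω (|s - t| / 2) ≤ |ω s - ω t| := by
  rcases lt_trichotomy s t with h | h | h
  · have := omega_key' ω hodd hnonneg hmono h
    have hm : ω ((t - s) / 2) ≤ |ω s - ω t| :=
      le_trans this (by rw [abs_sub_comm]; exact le_abs_self _)
    rwa [abs_sub_comm, abs_of_pos (by linarith : 0 < t - s)]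
  · subst h; simp [omega_zero ω hodd hnonneg hmono]
  · have := omega_key' ω hodd hnonneg hmono h
    have hm : ω ((s - t) / 2) ≤ |ω s - ω t| := le_trans this (le_abs_self _)
    rwa [abs_of_pos (by linarith : 0 < s - t)]

end omega_lemma

theorem alpha_dOmega_ge {d : ℕ} (ω : ℝ → ℝ)
    (hodd : ∀ x : ℝ, ω (-x) = -ω x)
    (hnonneg : ∀ x : ℝ, 0 ≤ x → 0 ≤ ω x)
    (hmono : ∀ x y : ℝ, 0 < x → x ≤ y → ω x / x ≤ ω y / y)
    (a : ℝ) (ha : 0 < a) (x y : Fin d → ℝ) :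
    alpha (a / Real.sqrt d) * ∑ j, alpha (ω (|x j - y j| / 2))
      ≤ alpha (a * dOmega ω x y) := by
  set c := a / Real.sqrt d with hc
  have hc0 : 0 ≤ c := div_nonneg ha.le (Real.sqrt_nonneg _)
  set t : Fin d → ℝ := fun j => |ω (x j) - ω (y j)| with htdef
  have ht0 : ∀ j, 0 ≤ t j := fun j => abs_nonneg _
  have step1 : ∀ j : Fin d, alpha c * alpha (ω (|x j - y j| / 2)) ≤ alpha (c * t j) := by
    intro j
    have hω0 : 0 ≤ ω (|x j - y j| / 2) := hnonneg _ (by positivity)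
    have hle : ω (|x j - y j| / 2) ≤ t j := omega_abs_sub ω hodd hnonneg hmono _ _
    calc alpha c * alpha (ω (|x j - y j| / 2))
        ≤ alpha c * alpha (t j) :=
          mul_le_mul_of_nonneg_left (alpha_mono hω0 hle) (alpha_nonneg c)
      _ ≤ alpha (c * t j) := alpha_mul_le hc0 (ht0 j)
  have step2 : ∑ j, alpha (c * t j) ≤ alpha (∑ j, c * t j) :=
    alpha_sum_le Finset.univ _ (fun j _ => mul_nonneg hc0 (ht0 j))
  have step3 : ∑ j, c * t j ≤ a * dOmega ω x y := by
    rw [← Finset.mul_sum]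
    have hsum : ∑ j, t j ≤ Real.sqrt d * dOmega ω x y := by
      have hCS : (∑ j, t j) ^ 2 ≤ (d : ℝ) * ∑ j, (ω (x j) - ω (y j)) ^ 2 := by
        have := sq_sum_le_card_mul_sum_sq (s := Finset.univ) (f := t)
        simpa [htdef, sq_abs] using this
      have h1 : 0 ≤ ∑ j, t j := Finset.sum_nonneg fun j _ => ht0 j
      have h2 : Real.sqrt ((∑ j, t j) ^ 2) ≤
          Real.sqrt ((d : ℝ) * ∑ j, (ω (x j) - ω (y j)) ^ 2) :=
        Real.sqrt_le_sqrt hCS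
      rw [Real.sqrt_sq h1, Real.sqrt_mul (by positivity)] at h2
      exact h2
    calc c * ∑ j, t j ≤ c * (Real.sqrt d * dOmega ω x y) :=
          mul_le_mul_of_nonneg_left hsum hc0
      _ ≤ a * dOmega ω x y := by
          rcases Nat.eq_zero_or_pos d with hd | hd
          · subst hd; simp [dOmega]
          · have hsd : 0 < Real.sqrt d := Real.sqrt_pos.mpr (by positivity)
            rw [hc]
            have : a / Real.sqrt d * (Real.sqrt d * dOmega ω x y)
                = a * dOmega ω x y * (Real.sqrt d / Real.sqrt d) := by ring
            rw [this, div_self hsd.ne', mul_one]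
  have hsum0 : 0 ≤ ∑ j, c * t j :=
    Finset.sum_nonneg fun j _ => mul_nonneg hc0 (ht0 j)
  calc alpha c * ∑ j, alpha (ω (|x j - y j| / 2))
      = ∑ j, alpha c * alpha (ω (|x j - y j| / 2)) := Finset.mul_sum _ _ _
    _ ≤ ∑ j, alpha (c * t j) := Finset.sum_le_sum fun j _ => step1 j
    _ ≤ alpha (∑ j, c * t j) := step2
    _ ≤ alpha (a * dOmega ω x y) := alpha_mono hsum0 step3
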